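/- Assume G' has no negative cycle. Let T be an SPT of G and T' an SPT of G', both rooted at s. Let (u₁, u₂) be an edge of T with (u₁, u₂) ≠ e₀ and δ(u₁) = δ(u₂), and let u be a vertex such that u₂ lies on the tree path π_{s,u} from s to u in T, the subpath π₂ = π_{s,u}[u₂, u] does not traverse e₀, and π₂ is also the tree path from u₂ to u in T'. Then dist_{G'}(u) = dist_{G'}(u₁) + ω(u₁, u₂) + length_G(π₂); consequently, the concatenation of the tree path from s to u₁ in T' with the edge (u₁, u₂) and the path π₂ is a shortest path from s to u in G'. -/

import Mathlib

/-! The edge `(u₁, u₂)` of `T` gives `dist_G(u₂) = dist_G(u₁) + ω(u₁, u₂)`, so `δ(u₁) = δ(u₂)`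
transfers this identity to `G'`. Since `π₂` is also a tree path of `T'` and avoids `e₀`, its
length is the same under `ω` and `ω'`, and `dist_{G'}(u) = dist_{G'}(u₂) + length_G(π₂)`.
The concatenated path has exactly this length. -/

namespace DynSPT

variable {V : Type*}

/-- The list of consecutive edges of a path given as a list of vertices. -/
def edgeList (l : List V) : List (V × V) := l.zip l.tail

/-- The length of a path with respect to the weight function `ω`. -/
def len (ω : V → V → ℝ) (l : List V) : ℝ :=
  ((edgeList l).map fun p => ω p.1 p.2).sum

/-- `l` is a path in the directed graph with edge relation `E`. -/
def IsWalk (E : V → V → Prop) (l : List V) : Prop := l ≠ [] ∧ l.Chain' E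

/-- `l` is a path from `u` to `v` in the directed graph with edge relation `E`. -/
def IsWalkFrom (E : V → V → Prop) (l : List V) (u v : V) : Prop :=
  IsWalk E l ∧ l.head? = some u ∧ l.getLast? = some v

/-- The path `l` traverses the edge `e`. -/
def Traverses (l : List V) (e : V × V) : Prop := e ∈ edgeList l

/-- `l` is a cycle: a path with at least one edge whose first and last vertices agree. -/
def IsCycle (E : V → V → Prop) (l : List V) : Prop :=
  ∃ v, IsWalkFrom E l v v ∧ 2 ≤ l.length

/-- The weighted directed graph `(E, ω)` has a negative cycle. -/
def HasNegCycle (E : V → V → Prop) (ω : V → V → ℝ) : Prop :=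
  ∃ l, IsCycle E l ∧ len ω l < 0

/-- The weighted directed graph `(E, ω)` has a zero-length cycle. -/
def HasZeroCycle (E : V → V → Prop) (ω : V → V → ℝ) : Prop :=
  ∃ l, IsCycle E l ∧ len ω l = 0

/-- The distance from `s` to `v`: the infimum of the lengths of paths from `s` to `v`. -/
noncomputable def dist (E : V → V → Prop) (ω : V → V → ℝ) (s v : V) : ℝ :=
  sInf {L : ℝ | ∃ l, IsWalkFrom E l s v ∧ len ω l = L}

/-- A spanning tree of the directed graph `E` rooted at `s`, recorded by the parent
function together with, for every vertex `v`, the tree path from `s` to `v`. -/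
structure RootedTree (E : V → V → Prop) (s : V) where
  parent : V → V
  path : V → List V
  path_root : path s = [s]
  parent_edge : ∀ v, v ≠ s → E (parent v) v
  path_eq : ∀ v, v ≠ s → path v = path (parent v) ++ [v]
  path_isWalkFrom : ∀ v, IsWalkFrom E (path v) s v

/-- `(a, b)` is an edge of the rooted tree `T`. -/
def RootedTree.IsEdge {E : V → V → Prop} {s : V} (T : RootedTree E s) (a b : V) : Prop :=
  b ≠ s ∧ T.parent b = a

/-- `T` is a shortest-path tree for the weight function `ω`:
every tree path from the root is a shortest path. -/
def IsSPT {E : V → V → Prop} {s : V} (ω : V → V → ℝ) (T : RootedTree E s) : Prop :=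
  ∀ v, len ω (T.path v) = dist E ω s v

@[simp]
lemma edgeList_cons_cons (a b : V) (l : List V) :
    edgeList (a :: b :: l) = (a, b) :: edgeList (b :: l) := rfl

lemma edgeList_append_of_getLast? {A : List V} {m : V} (h : A.getLast? = some m)
    (B : List V) : edgeList (A ++ B) = edgeList A ++ edgeList (m :: B) := by
  induction A with
  | nil => simp at h
  | cons a A ih =>
    cases A with
    | nil =>
      obtain rfl : a = m := by simpa using h
      rfl
    | cons b A =>
      rw [List.getLast?_cons_cons] at h
      simp only [List.cons_append, edgeList_cons_cons] at ih ⊢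
      rw [ih h]

lemma len_append_of_getLast? (ω : V → V → ℝ) {A : List V} {m : V} (h : A.getLast? = some m)
    (B : List V) : len ω (A ++ B) = len ω A + len ω (m :: B) := by
  simp only [len, edgeList_append_of_getLast? h, List.map_append, List.sum_append]

lemma len_cons_cons (ω : V → V → ℝ) (a b : V) (l : List V) :
    len ω (a :: b :: l) = ω a b + len ω (b :: l) := by
  simp [len]

lemma len_append_cons_of_getLast? (ω : V → V → ℝ) {A : List V} {a : V}
    (h : A.getLast? = some a) (b : V) (l : List V) :
    len ω (A ++ b :: l) = len ω A + ω a b + len ω (b :: l) := by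
  rw [len_append_of_getLast? ω h, len_cons_cons, add_assoc]

lemma len_congr_of_not_traverses {ω ω' : V → V → ℝ} {e : V × V}
    (hω : ∀ a b, (a, b) ≠ e → ω' a b = ω a b) {l : List V} (h : ¬ Traverses l e) :
    len ω' l = len ω l := by
  unfold len
  congr 1
  refine List.map_congr_left fun p hp => hω p.1 p.2 ?_
  rintro rfl
  exact h hp

lemma IsWalkFrom.of_append_cons {E : V → V → Prop} {A l : List V} {b s v : V}
    (h : IsWalkFrom E (A ++ b :: l) s v) : IsWalkFrom E (b :: l) b v := by
  obtain ⟨⟨-, hchain⟩, -, hlast⟩ := h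
  refine ⟨⟨List.cons_ne_nil _ _, hchain.suffix (List.suffix_append _ _)⟩, rfl, ?_⟩
  simpa [List.getLast?_append] using hlast

lemma IsWalkFrom.append_cons {E : V → V → Prop} {A l : List V} {s a b v : V}
    (hA : IsWalkFrom E A s a) (hab : E a b) (hl : IsWalkFrom E (b :: l) b v) :
    IsWalkFrom E (A ++ b :: l) s v := by
  obtain ⟨⟨hA_ne, hA_chain⟩, hA_head, hA_last⟩ := hA
  refine ⟨⟨by simp [hA_ne], hA_chain.append hl.1.2 ?_⟩, ?_, ?_⟩
  · intro x hx y hy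
    rw [hA_last] at hx
    simp only [Option.mem_def, Option.some.injEq, List.head?_cons] at hx hy
    exact hx ▸ hy ▸ hab
  · rw [List.head?_append, hA_head]
    rfl
  · rw [List.getLast?_append, hl.2.2]
    rfl

namespace RootedTree

variable {E : V → V → Prop} {s : V} (T : RootedTree E s)

lemma path_getLast? (v : V) : (T.path v).getLast? = some v :=
  (T.path_isWalkFrom v).2.2

lemma IsEdge.adj {T : RootedTree E s} {a b : V} (h : T.IsEdge a b) : E a b :=
  h.2 ▸ T.parent_edge b h.1

lemma IsEdge.path_eq {T : RootedTree E s} {a b : V} (h : T.IsEdge a b) :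
    T.path b = T.path a ++ [b] := by
  rw [T.path_eq b h.1, h.2]

end RootedTree

section SPT

variable {E : V → V → Prop} {s : V} {ω : V → V → ℝ} {T : RootedTree E s}

lemma IsSPT.dist_eq_of_path_eq_append (hT : IsSPT ω T) {v w : V} {l : List V}
    (h : T.path w = T.path v ++ l) : dist E ω s w = dist E ω s v + len ω (v :: l) := by
  rw [← hT w, ← hT v, h, len_append_of_getLast? ω (T.path_getLast? v)]

lemma IsSPT.dist_eq_of_isEdge (hT : IsSPT ω T) {a b : V} (h : T.IsEdge a b) :
    dist E ω s b = dist E ω s a + ω a b := by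
  rw [hT.dist_eq_of_path_eq_append h.path_eq, len_cons_cons]
  simp [len, edgeList]

end SPT

theorem statement_8_general
    {V : Type*} (E : V → V → Prop) (ω ω' : V → V → ℝ) (s x₀ y₀ : V)
    (hω' : ∀ a b, (a, b) ≠ (x₀, y₀) → ω' a b = ω a b)
    (T T' : RootedTree E s) (hT : IsSPT ω T) (hT' : IsSPT ω' T')
    (u₁ u₂ u : V) (l₁ l₂ : List V)
    (hedge : T.IsEdge u₁ u₂) (hne : (u₁, u₂) ≠ (x₀, y₀))
    (hδ : dist E ω' s u₁ - dist E ω s u₁ = dist E ω' s u₂ - dist E ω s u₂)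
    (hdecomp : T.path u = l₁ ++ u₂ :: l₂)
    (hnotrav : ¬ Traverses (u₂ :: l₂) (x₀, y₀))
    (hseg : T'.path u = T'.path u₂ ++ l₂) :
    dist E ω' s u = dist E ω' s u₁ + ω u₁ u₂ + len ω (u₂ :: l₂) ∧
      IsWalkFrom E (T'.path u₁ ++ u₂ :: l₂) s u ∧
      len ω' (T'.path u₁ ++ u₂ :: l₂) = dist E ω' s u := by
  have hπ₂ : len ω' (u₂ :: l₂) = len ω (u₂ :: l₂) := len_congr_of_not_traverses hω' hnotrav
  have hdist₂ : dist E ω' s u₂ = dist E ω' s u₁ + ω u₁ u₂ := by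
    linarith [hT.dist_eq_of_isEdge hedge]
  have hdist : dist E ω' s u = dist E ω' s u₁ + ω u₁ u₂ + len ω (u₂ :: l₂) := by
    rw [hT'.dist_eq_of_path_eq_append hseg, hπ₂, hdist₂]
  refine ⟨hdist, ?_, ?_⟩
  · have hwalk := T.path_isWalkFrom u
    rw [hdecomp] at hwalk
    exact (T'.path_isWalkFrom u₁).append_cons hedge.adj hwalk.of_append_cons
  · rw [len_append_cons_of_getLast? ω' (T'.path_getLast? u₁), hπ₂, hω' u₁ u₂ hne, hT' u₁, hdist]

theorem statement_8
    {V : Type*} [Fintype V] (E : V → V → Prop) (ω ω' : V → V → ℝ) (s x₀ y₀ : V)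
    (hE₀ : E x₀ y₀)
    (hreach : ∀ v, ∃ l, IsWalkFrom E l s v)
    (hω' : ∀ a b, (a, b) ≠ (x₀, y₀) → ω' a b = ω a b)
    (hG : ¬ HasNegCycle E ω)
    (hG' : ¬ HasNegCycle E ω')
    (T T' : RootedTree E s) (hT : IsSPT ω T) (hT' : IsSPT ω' T')
    (u₁ u₂ u : V) (l₁ l₂ : List V)
    (hedge : T.IsEdge u₁ u₂) (hne : (u₁, u₂) ≠ (x₀, y₀))
    (hδ : dist E ω' s u₁ - dist E ω s u₁ = dist E ω' s u₂ - dist E ω s u₂)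
    (hdecomp : T.path u = l₁ ++ u₂ :: l₂)
    (hnotrav : ¬ Traverses (u₂ :: l₂) (x₀, y₀))
    (hseg : T'.path u = T'.path u₂ ++ l₂) :
    dist E ω' s u = dist E ω' s u₁ + ω u₁ u₂ + len ω (u₂ :: l₂) ∧
      IsWalkFrom E (T'.path u₁ ++ u₂ :: l₂) s u ∧
      len ω' (T'.path u₁ ++ u₂ :: l₂) = dist E ω' s u :=
  statement_8_general E ω ω' s x₀ y₀ hω' T T' hT hT' u₁ u₂ u l₁ l₂ hedge hne hδ hdecomp hnotrav hseg

end DynSPT
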